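/- arXiv:0905.3325 — 3 statements merged into one kernel-verified Lean document; each statement's English description precedes it below -/
import Mathlib

section
/- Let H be a complex Hilbert space, P₁, P₂ unitary operators on H, and A the operator on H × H given by A(ξ, η) = (−P₁η, −P₂ξ). If λ ∈ ℂ satisfies λ² ∉ spectrum(P₁P₂) and λ² ∉ spectrum(P₂P₁), then λ is in the resolvent set of A, and (A − λI)⁻¹(ξ, η) = ( (P₁P₂ − λ²I)⁻¹(λξ − P₁η), (P₂P₁ − λ²I)⁻¹(λη − P₂ξ) ). -/
/-- Resolvent of the block operator `A(ξ,η) = (−P₁η, −P₂ξ)`: if `λ²` is in the resolvent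
set of `P₁P₂` and of `P₂P₁`, then `λ` is in the resolvent set of `A` and
`(A − λI)⁻¹(ξ,η) = ((P₁P₂ − λ²I)⁻¹(λξ − P₁η), (P₂P₁ − λ²I)⁻¹(λη − P₂ξ))`. -/
theorem intertwining_operator_resolvent
    {H : Type*} [NormedAddCommGroup H] [InnerProductSpace ℂ H] [CompleteSpace H]
    (P₁ P₂ : H →L[ℂ] H)
    (hP₁u : ContinuousLinearMap.adjoint P₁ ∘L P₁ = 1 ∧ P₁ ∘L ContinuousLinearMap.adjoint P₁ = 1)
    (hP₂u : ContinuousLinearMap.adjoint P₂ ∘L P₂ = 1 ∧ P₂ ∘L ContinuousLinearMap.adjoint P₂ = 1)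
    (A : H × H →L[ℂ] H × H)
    (hA : ∀ ξ η : H, A (ξ, η) = (-(P₁ η), -(P₂ ξ)))
    (lam : ℂ)
    (h₁₂ : lam ^ 2 ∉ spectrum ℂ (P₁ * P₂))
    (h₂₁ : lam ^ 2 ∉ spectrum ℂ (P₂ * P₁)) :
    lam ∉ spectrum ℂ A ∧
    ∀ ξ η : H,
      Ring.inverse (A - lam • (1 : H × H →L[ℂ] H × H)) (ξ, η)
        = (Ring.inverse (P₁ * P₂ - lam ^ 2 • (1 : H →L[ℂ] H)) (lam • ξ - P₁ η),
           Ring.inverse (P₂ * P₁ - lam ^ 2 • (1 : H →L[ℂ] H)) (lam • η - P₂ ξ)) := by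
  classical
  set S₁ : H →L[ℂ] H := P₁ * P₂ - lam ^ 2 • (1 : H →L[ℂ] H) with hS₁def
  set S₂ : H →L[ℂ] H := P₂ * P₁ - lam ^ 2 • (1 : H →L[ℂ] H) with hS₂def
  have hS₁ : IsUnit S₁ := by
    rw [spectrum.notMem_iff] at h₁₂
    have := h₁₂.neg
    simpa [hS₁def, Algebra.algebraMap_eq_smul_one, neg_sub] using this
  have hS₂ : IsUnit S₂ := by
    rw [spectrum.notMem_iff] at h₂₁
    have := h₂₁.neg
    simpa [hS₂def, Algebra.algebraMap_eq_smul_one, neg_sub] using this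
  set R₁ : H →L[ℂ] H := Ring.inverse S₁ with hR₁def
  set R₂ : H →L[ℂ] H := Ring.inverse S₂ with hR₂def
  have hR₁S₁ : R₁ * S₁ = 1 := Ring.inverse_mul_cancel _ hS₁
  have hS₁R₁ : S₁ * R₁ = 1 := Ring.mul_inverse_cancel _ hS₁
  have hR₂S₂ : R₂ * S₂ = 1 := Ring.inverse_mul_cancel _ hS₂
  have hS₂R₂ : S₂ * R₂ = 1 := Ring.mul_inverse_cancel _ hS₂
  have hint₁ : S₁ * P₁ = P₁ * S₂ := by
    simp only [hS₁def, hS₂def, sub_mul, mul_sub, smul_mul_assoc, mul_smul_comm,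
      one_mul, mul_one, mul_assoc]
  have hint₂ : S₂ * P₂ = P₂ * S₁ := by
    simp only [hS₁def, hS₂def, sub_mul, mul_sub, smul_mul_assoc, mul_smul_comm,
      one_mul, mul_one, mul_assoc]
  have hRP₁ : R₁ * P₁ = P₁ * R₂ := by
    calc R₁ * P₁ = R₁ * P₁ * (S₂ * R₂) := by rw [hS₂R₂, mul_one]
    _ = R₁ * (P₁ * S₂) * R₂ := by simp only [mul_assoc]
    _ = R₁ * (S₁ * P₁) * R₂ := by rw [hint₁]
    _ = (R₁ * S₁) * (P₁ * R₂) := by simp only [mul_assoc]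
    _ = P₁ * R₂ := by rw [hR₁S₁, one_mul]
  have hRP₂ : R₂ * P₂ = P₂ * R₁ := by
    calc R₂ * P₂ = R₂ * P₂ * (S₁ * R₁) := by rw [hS₁R₁, mul_one]
    _ = R₂ * (P₂ * S₁) * R₁ := by simp only [mul_assoc]
    _ = R₂ * (S₂ * P₂) * R₁ := by rw [hint₂]
    _ = (R₂ * S₂) * (P₂ * R₁) := by simp only [mul_assoc]
    _ = P₂ * R₁ := by rw [hR₂S₂, one_mul]
  -- pointwise versions
  have key₁ : ∀ v : H, R₁ (P₁ v) = P₁ (R₂ v) := fun v => by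
    have := congrArg (fun T : H →L[ℂ] H => T v) hRP₁
    simpa [ContinuousLinearMap.mul_apply] using this
  have key₂ : ∀ v : H, R₂ (P₂ v) = P₂ (R₁ v) := fun v => by
    have := congrArg (fun T : H →L[ℂ] H => T v) hRP₂
    simpa [ContinuousLinearMap.mul_apply] using this
  have hR₁S₁' : ∀ v : H, R₁ (S₁ v) = v := fun v => by
    have := congrArg (fun T : H →L[ℂ] H => T v) hR₁S₁
    simpa [ContinuousLinearMap.mul_apply] using this
  have hR₂S₂' : ∀ v : H, R₂ (S₂ v) = v := fun v => by
    have := congrArg (fun T : H →L[ℂ] H => T v) hR₂S₂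
    simpa [ContinuousLinearMap.mul_apply] using this
  have hS₁R₁' : ∀ v : H, S₁ (R₁ v) = v := fun v => by
    have := congrArg (fun T : H →L[ℂ] H => T v) hS₁R₁
    simpa [ContinuousLinearMap.mul_apply] using this
  have hS₂R₂' : ∀ v : H, S₂ (R₂ v) = v := fun v => by
    have := congrArg (fun T : H →L[ℂ] H => T v) hS₂R₂
    simpa [ContinuousLinearMap.mul_apply] using this
  -- the candidate inverse
  set B : H × H →L[ℂ] H × H :=
    (R₁ ∘L (lam • ContinuousLinearMap.fst ℂ H H - P₁ ∘L ContinuousLinearMap.snd ℂ H H)).prod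
      (R₂ ∘L (lam • ContinuousLinearMap.snd ℂ H H - P₂ ∘L ContinuousLinearMap.fst ℂ H H))
    with hBdef
  have hB : ∀ ξ η : H, B (ξ, η) = (R₁ (lam • ξ - P₁ η), R₂ (lam • η - P₂ ξ)) := by
    intro ξ η
    simp [hBdef]
  set T : H × H →L[ℂ] H × H := A - lam • (1 : H × H →L[ℂ] H × H) with hTdef
  have hT : ∀ ξ η : H, T (ξ, η) = (-(P₁ η) - lam • ξ, -(P₂ ξ) - lam • η) := by
    intro ξ η
    simp [hTdef, hA ξ η, Prod.smul_mk, Prod.mk_sub_mk]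
  have hTB : T * B = 1 := by
    apply ContinuousLinearMap.ext
    rintro ⟨ξ, η⟩
    have e1 : -(P₁ (R₂ (lam • η - P₂ ξ))) - lam • R₁ (lam • ξ - P₁ η) = ξ := by
      rw [← key₁]
      have : -(R₁ (P₁ (lam • η - P₂ ξ))) - lam • R₁ (lam • ξ - P₁ η)
          = R₁ (-(P₁ (lam • η - P₂ ξ)) - lam • (lam • ξ - P₁ η)) := by
        simp [map_sub, map_neg, map_smul]
      rw [this]
      have : -(P₁ (lam • η - P₂ ξ)) - lam • (lam • ξ - P₁ η) = S₁ ξ := by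
        simp only [hS₁def, ContinuousLinearMap.sub_apply, ContinuousLinearMap.mul_apply,
          ContinuousLinearMap.smul_apply, ContinuousLinearMap.one_apply, map_sub, map_smul,
          smul_sub]
        module
      rw [this, hR₁S₁']
    have e2 : -(P₂ (R₁ (lam • ξ - P₁ η))) - lam • R₂ (lam • η - P₂ ξ) = η := by
      rw [← key₂]
      have : -(R₂ (P₂ (lam • ξ - P₁ η))) - lam • R₂ (lam • η - P₂ ξ)
          = R₂ (-(P₂ (lam • ξ - P₁ η)) - lam • (lam • η - P₂ ξ)) := by
        simp [map_sub, map_neg, map_smul]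
      rw [this]
      have : -(P₂ (lam • ξ - P₁ η)) - lam • (lam • η - P₂ ξ) = S₂ η := by
        simp only [hS₂def, ContinuousLinearMap.sub_apply, ContinuousLinearMap.mul_apply,
          ContinuousLinearMap.smul_apply, ContinuousLinearMap.one_apply, map_sub, map_smul,
          smul_sub]
        module
      rw [this, hR₂S₂']
    show T (B (ξ, η)) = (ξ, η)
    rw [hB ξ η, hT]
    exact Prod.ext e1 e2
  have hBT : B * T = 1 := by
    apply ContinuousLinearMap.ext
    rintro ⟨ξ, η⟩
    show B (T (ξ, η)) = (ξ, η)
    rw [hT ξ η, hB]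
    have e1 : R₁ (lam • (-(P₁ η) - lam • ξ) - P₁ (-(P₂ ξ) - lam • η)) = ξ := by
      have : lam • (-(P₁ η) - lam • ξ) - P₁ (-(P₂ ξ) - lam • η) = S₁ ξ := by
        simp only [hS₁def, ContinuousLinearMap.sub_apply, ContinuousLinearMap.mul_apply,
          ContinuousLinearMap.smul_apply, ContinuousLinearMap.one_apply, map_sub, map_neg,
          map_smul, smul_sub]
        module
      rw [this, hR₁S₁']
    have e2 : R₂ (lam • (-(P₂ ξ) - lam • η) - P₂ (-(P₁ η) - lam • ξ)) = η := by
      have : lam • (-(P₂ ξ) - lam • η) - P₂ (-(P₁ η) - lam • ξ) = S₂ η := by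
        simp only [hS₂def, ContinuousLinearMap.sub_apply, ContinuousLinearMap.mul_apply,
          ContinuousLinearMap.smul_apply, ContinuousLinearMap.one_apply, map_sub, map_neg,
          map_smul, smul_sub]
        module
      rw [this, hR₂S₂']
    exact Prod.ext e1 e2
  have hUnitT : IsUnit T := ⟨⟨T, B, hTB, hBT⟩, rfl⟩
  have hRinvT : Ring.inverse T = B := by
    have : Ring.inverse ((⟨T, B, hTB, hBT⟩ : (H × H →L[ℂ] H × H)ˣ) : H × H →L[ℂ] H × H)
        = ((⟨T, B, hTB, hBT⟩ : (H × H →L[ℂ] H × H)ˣ)⁻¹ : (H × H →L[ℂ] H × H)ˣ) :=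
      Ring.inverse_unit _
    simpa using this
  constructor
  · rw [spectrum.notMem_iff]
    have : algebraMap ℂ (H × H →L[ℂ] H × H) lam - A = -T := by
      simp [hTdef, Algebra.algebraMap_eq_smul_one, neg_sub]
    rw [this]
    exact hUnitT.neg
  · intro ξ η
    rw [hRinvT]
    exact hB ξ η
end

section
/- With the notation above (two inner products on Λ with sum (·,·)_Λ), there exists C > 0 such that for all λ ∈ Λ: ((S₁⁻¹S₂ + S₂⁻¹S₁)λ, λ)_Λ ≥ (1 + C)‖λ‖_Λ². In particular (S₁⁻¹S₂ λ, λ)_{Λ₁} = ‖λ‖_{Λ₂}² ≥ C‖λ‖_{Λ₁}². -/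
lemma cs_pos_op {Λ : Type*} [NormedAddCommGroup Λ] [InnerProductSpace ℂ Λ] [CompleteSpace Λ]
    (T : Λ →L[ℂ] Λ) (hsa : IsSelfAdjoint T)
    (hpos : ∀ x : Λ, 0 ≤ (@inner ℂ _ _ (T x) x).re) (x y : Λ) :
    (@inner ℂ _ _ (T x) y).re ^ 2 ≤ (@inner ℂ _ _ (T x) x).re * (@inner ℂ _ _ (T y) y).re := by
  have hsym : ∀ u v : Λ, (@inner ℂ _ _ (T u) v).re = (@inner ℂ _ _ (T v) u).re := by
    intro u v
    have h1 : @inner ℂ _ _ (T u) v = @inner ℂ _ _ u (T v) := by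
      rw [← ContinuousLinearMap.adjoint_inner_left, hsa.adjoint_eq]
    rw [h1]
    exact inner_re_symm (𝕜 := ℂ) _ _
  have key : ∀ t : ℝ, 0 ≤ (@inner ℂ _ _ (T x) x).re * (t * t) +
      (2 * (@inner ℂ _ _ (T x) y).re) * t + (@inner ℂ _ _ (T y) y).re := by
    intro t
    have h := hpos ((t : ℂ) • x + y)
    have hexp : (@inner ℂ _ _ (T ((t : ℂ) • x + y)) ((t : ℂ) • x + y)).re
        = (@inner ℂ _ _ (T x) x).re * (t * t) +
          (2 * (@inner ℂ _ _ (T x) y).re) * t + (@inner ℂ _ _ (T y) y).re := by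
      simp only [map_add, map_smul, inner_add_left, inner_add_right, inner_smul_left,
        inner_smul_right, Complex.add_re, Complex.mul_re, Complex.conj_re, Complex.conj_im,
        Complex.ofReal_re, Complex.ofReal_im]
      linear_combination t * hsym y x
    linarith [hexp ▸ h]
  have hd := discrim_le_zero key
  rw [discrim] at hd
  nlinarith [hd]

lemma self_re_norm {Λ : Type*} [NormedAddCommGroup Λ] [InnerProductSpace ℂ Λ] (x : Λ) :
    (@inner ℂ _ _ x x).re = ‖x‖ ^ 2 := by
  exact inner_self_eq_norm_sq (𝕜 := ℂ) x

lemma inv_bound {Λ : Type*} [NormedAddCommGroup Λ] [InnerProductSpace ℂ Λ] [CompleteSpace Λ]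
    (T : Λ →L[ℂ] Λ) (hsa : IsSelfAdjoint T)
    (hpos : ∀ x : Λ, 0 ≤ (@inner ℂ _ _ (T x) x).re) (hu : IsUnit T) (lam : Λ) :
    (‖lam‖ ^ 2) ^ 2 ≤ (@inner ℂ _ _ (Ring.inverse T lam) lam).re *
      (@inner ℂ _ _ (T lam) lam).re := by
  have hμ : T (Ring.inverse T lam) = lam := by
    have h : (T * Ring.inverse T) lam = lam := by
      rw [Ring.mul_inverse_cancel _ hu]; rfl
    simpa [ContinuousLinearMap.mul_apply] using h
  have h := cs_pos_op T hsa hpos (Ring.inverse T lam) lam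
  rw [hμ] at h
  rw [self_re_norm] at h
  have hre : (@inner ℂ _ _ lam (Ring.inverse T lam)).re
      = (@inner ℂ _ _ (Ring.inverse T lam) lam).re := inner_re_symm (𝕜 := ℂ) _ _
  rw [hre] at h
  exact h

set_option maxHeartbeats 1600000 in
/-- Operator form of the coerciveness statement. With `T₁, T₂` representing the inner
products `(·,·)_{Λ₁}, (·,·)_{Λ₂}` (so that `(·,·)_Λ` corresponds to `T₁ + T₂ = 1`, and
`S_m⁻¹S_{m'} = T_m⁻¹T_{m'}`), and with the equivalence of the norms expressed by
mutual coercivity: there is `C > 0` with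
`((S₁⁻¹S₂ + S₂⁻¹S₁)λ, λ)_Λ ≥ (1 + C)‖λ‖_Λ²`, and in particular
`(S₁⁻¹S₂λ, λ)_{Λ₁} = ‖λ‖_{Λ₂}² ≥ C‖λ‖_{Λ₁}²`. -/
theorem steklov_coerciveness
    {Λ : Type*} [NormedAddCommGroup Λ] [InnerProductSpace ℂ Λ] [CompleteSpace Λ]
    (T₁ T₂ : Λ →L[ℂ] Λ)
    (hT₁sa : IsSelfAdjoint T₁) (hT₂sa : IsSelfAdjoint T₂)
    (hT₁c : ∃ c : ℝ, 0 < c ∧ ∀ lam : Λ, c * ‖lam‖ ^ 2 ≤ (@inner ℂ _ _ (T₁ lam) lam).re)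
    (hT₂c : ∃ c : ℝ, 0 < c ∧ ∀ lam : Λ, c * ‖lam‖ ^ 2 ≤ (@inner ℂ _ _ (T₂ lam) lam).re)
    (hT₁u : IsUnit T₁) (hT₂u : IsUnit T₂)
    (hsum : T₁ + T₂ = 1)
    (hequiv₁ : ∃ c : ℝ, 0 < c ∧ ∀ lam : Λ,
      c * (@inner ℂ _ _ (T₁ lam) lam).re ≤ (@inner ℂ _ _ (T₂ lam) lam).re)
    (hequiv₂ : ∃ c : ℝ, 0 < c ∧ ∀ lam : Λ,
      c * (@inner ℂ _ _ (T₂ lam) lam).re ≤ (@inner ℂ _ _ (T₁ lam) lam).re) :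
    ∃ C : ℝ, 0 < C ∧
      (∀ lam : Λ, (1 + C) * ‖lam‖ ^ 2 ≤
        (@inner ℂ _ _ ((Ring.inverse T₁ * T₂ + Ring.inverse T₂ * T₁) lam) lam).re) ∧
      (∀ lam : Λ,
        @inner ℂ _ _ (T₁ ((Ring.inverse T₁ * T₂) lam)) lam = @inner ℂ _ _ (T₂ lam) lam) ∧
      (∀ lam : Λ,
        C * (@inner ℂ _ _ (T₁ lam) lam).re ≤ (@inner ℂ _ _ (T₂ lam) lam).re) := by
  obtain ⟨c₁, hc₁pos, hc₁⟩ := hT₁c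
  obtain ⟨c₂, hc₂pos, hc₂⟩ := hT₂c
  obtain ⟨ce, hcepos, hce⟩ := hequiv₁
  have hpos₁ : ∀ x : Λ, 0 ≤ (@inner ℂ _ _ (T₁ x) x).re := fun x =>
    le_trans (by positivity) (hc₁ x)
  have hpos₂ : ∀ x : Λ, 0 ≤ (@inner ℂ _ _ (T₂ x) x).re := fun x =>
    le_trans (by positivity) (hc₂ x)
  refine ⟨min ce 1, lt_min hcepos one_pos, ?_, ?_, ?_⟩
  · intro lam
    have hS₁' : Ring.inverse T₁ * T₁ = 1 := Ring.inverse_mul_cancel _ hT₁u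
    have hS₂' : Ring.inverse T₂ * T₂ = 1 := Ring.inverse_mul_cancel _ hT₂u
    have h₂ : T₂ = 1 - T₁ := by rw [← hsum]; abel
    have h₁ : T₁ = 1 - T₂ := by rw [← hsum]; abel
    have e1 : Ring.inverse T₁ * T₂ = Ring.inverse T₁ - 1 := by
      rw [h₂, mul_sub, mul_one, hS₁']
    have e2 : Ring.inverse T₂ * T₁ = Ring.inverse T₂ - 1 := by
      rw [h₁, mul_sub, mul_one, hS₂']
    have htwo : (2 : Λ →L[ℂ] Λ) = 1 + 1 := by norm_num
    have hop : Ring.inverse T₁ * T₂ + Ring.inverse T₂ * T₁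
        = Ring.inverse T₁ + Ring.inverse T₂ - 2 := by
      rw [e1, e2, htwo]; abel
    rw [hop]
    have happ : ((Ring.inverse T₁ + Ring.inverse T₂ - 2) lam)
        = Ring.inverse T₁ lam + Ring.inverse T₂ lam - (lam + lam) := by
      simp [htwo, ContinuousLinearMap.sub_apply, ContinuousLinearMap.add_apply]
    rw [happ]
    have hgoal : (@inner ℂ _ _
          (Ring.inverse T₁ lam + Ring.inverse T₂ lam - (lam + lam)) lam).re
        = (@inner ℂ _ _ (Ring.inverse T₁ lam) lam).re
          + (@inner ℂ _ _ (Ring.inverse T₂ lam) lam).re - 2 * ‖lam‖ ^ 2 := by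
      simp only [inner_sub_left, inner_add_left, Complex.sub_re, Complex.add_re]
      rw [self_re_norm]; ring
    rw [hgoal]
    set a := (@inner ℂ _ _ (T₁ lam) lam).re with ha_def
    set b := (@inner ℂ _ _ (T₂ lam) lam).re with hb_def
    set p := (@inner ℂ _ _ (Ring.inverse T₁ lam) lam).re with hp_def
    set q := (@inner ℂ _ _ (Ring.inverse T₂ lam) lam).re with hq_def
    have hcs₁ : (‖lam‖ ^ 2) ^ 2 ≤ p * a := inv_bound T₁ hT₁sa hpos₁ hT₁u lam
    have hcs₂ : (‖lam‖ ^ 2) ^ 2 ≤ q * b := inv_bound T₂ hT₂sa hpos₂ hT₂u lam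
    have hab : a + b = ‖lam‖ ^ 2 := by
      have h := congrArg (fun f : Λ →L[ℂ] Λ => (@inner ℂ _ _ (f lam) lam).re) hsum
      simp only [ContinuousLinearMap.add_apply, inner_add_left, Complex.add_re,
        ContinuousLinearMap.one_apply] at h
      rw [self_re_norm] at h
      exact h
    rcases eq_or_ne lam 0 with h0 | h0
    · have hp0 : p = 0 := by simp [hp_def, h0]
      have hq0 : q = 0 := by simp [hq_def, h0]
      simp [h0, hp0, hq0]
    · have hs : (0:ℝ) < ‖lam‖ ^ 2 := by
        have := norm_pos_iff.mpr h0; positivity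
      have hapos : 0 < a := lt_of_lt_of_le (mul_pos hc₁pos hs) (hc₁ lam)
      have hbpos : 0 < b := lt_of_lt_of_le (mul_pos hc₂pos hs) (hc₂ lam)
      have hppos : 0 ≤ p := by nlinarith [hcs₁, sq_nonneg (‖lam‖ ^ 2)]
      have hqpos : 0 ≤ q := by nlinarith [hcs₂, sq_nonneg (‖lam‖ ^ 2)]
      have hC1 : min ce 1 ≤ 1 := min_le_right _ _
      have e3 : (‖lam‖ ^ 2) ^ 2 * (a + b) ≤ (p + q) * (a * b) := by
        nlinarith [mul_le_mul_of_nonneg_right hcs₁ hbpos.le,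
          mul_le_mul_of_nonneg_right hcs₂ hapos.le]
      have h4ab : 4 * (a * b) ≤ (a + b) ^ 2 := by nlinarith [sq_nonneg (a - b)]
      have e4 : (p + q) * (4 * (a * b)) ≤ (p + q) * (a + b) ^ 2 :=
        mul_le_mul_of_nonneg_left h4ab (add_nonneg hppos hqpos)
      have hpq : 4 * ‖lam‖ ^ 2 ≤ p + q := by
        rw [hab] at e3 e4
        nlinarith [e3, e4, mul_pos hs hs, hs]
      nlinarith [mul_le_mul_of_nonneg_right hC1 hs.le, hpq, hs]
  · intro lam
    have hkey : T₁ * (Ring.inverse T₁ * T₂) = T₂ := by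
      rw [← mul_assoc, Ring.mul_inverse_cancel _ hT₁u, one_mul]
    have h : T₁ ((Ring.inverse T₁ * T₂) lam) = T₂ lam := by
      have := congrArg (fun f : Λ →L[ℂ] Λ => f lam) hkey
      simpa [ContinuousLinearMap.mul_apply] using this
    rw [h]
  · intro lam
    calc min ce 1 * (@inner ℂ _ _ (T₁ lam) lam).re
        ≤ ce * (@inner ℂ _ _ (T₁ lam) lam).re :=
          mul_le_mul_of_nonneg_right (min_le_left _ _) (hpos₁ lam)
      _ ≤ _ := hce lam
end

section
/- Let H be a complex Hilbert space and A a unitary operator on H whose spectrum consists of eigenvalues ±e^{iτ_n/2} (τ_n ∈ ℝ, τ_n ≢ 0 mod 2π, τ_n → 0), with orthogonal eigenprojectors spanning H (Hilbert direct sum), and such that ±1 are not eigenvalues. Then for any 0 < θ < 1 and any π⁰, π^u ∈ H with π^u a fixed point of π ↦ θπ + (1−θ)Aπ − (1−θ)η, the iteration π^{p+1} = θπ^p + (1−θ)Aπ^p − (1−θ)η converges strongly to π^u as p → ∞. -/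
open Filter

/-- Scalar estimate: if `‖μ‖ = 1` and `μ ≠ 1` then `‖θ + (1-θ)μ‖ < 1`. -/
lemma theta_contraction {μ : ℂ} (hμ : ‖μ‖ = 1) (hμ1 : μ ≠ 1)
    {θ : ℝ} (hθ₀ : 0 < θ) (hθ₁ : θ < 1) :
    ‖(θ : ℂ) + (1 - θ) * μ‖ < 1 := by
  have hsq : μ.re ^ 2 + μ.im ^ 2 = 1 := by
    have h := Complex.normSq_eq_norm_sq μ
    rw [Complex.normSq_apply, hμ] at h
    nlinarith [h]
  have hre : μ.re < 1 := by
    rcases lt_or_eq_of_le (show μ.re ≤ 1 by nlinarith [sq_nonneg μ.im, sq_nonneg (μ.re - 1)]) with h | h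
    · exact h
    · exfalso
      have him : μ.im = 0 := by nlinarith
      exact hμ1 (Complex.ext (by simp [h]) (by simp [him]))
  have hnormsq : ‖(θ : ℂ) + (1 - θ) * μ‖ ^ 2 = 1 - 2 * θ * (1 - θ) * (1 - μ.re) := by
    rw [Complex.sq_norm]
    simp only [Complex.normSq_apply, Complex.add_re, Complex.add_im, Complex.mul_re,
      Complex.mul_im, Complex.ofReal_re, Complex.ofReal_im, Complex.sub_re, Complex.sub_im,
      Complex.one_re, Complex.one_im]
    linear_combination (1 - θ)^2 * hsq
  have hc : 0 < 2 * θ * (1 - θ) * (1 - μ.re) :=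
    mul_pos (mul_pos (mul_pos two_pos hθ₀) (by linarith)) (by linarith)
  nlinarith [norm_nonneg ((θ : ℂ) + (1 - θ) * μ), hnormsq, hc]

/-- Convergence of the θ-algorithm for the Helmholtz equation. `A` is a unitary
operator on `H` whose eigenspaces span a dense subspace of `H` (Hilbert direct sum)
and all of whose eigenvalues have modulus `1` and are distinct from `±1`. If
`π^u` is a fixed point of `π ↦ θπ + (1−θ)(Aπ − η)` (i.e. `(A − I)π^u = η`), then for
any initial value, the iteration `π^{p+1} = θπ^p + (1−θ)(Aπ^p − η)` converges to
`π^u`. -/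
theorem theta_algorithm_converges
    {H : Type*} [NormedAddCommGroup H] [InnerProductSpace ℂ H] [CompleteSpace H]
    (A : H →L[ℂ] H)
    (hAu₁ : ContinuousLinearMap.adjoint A ∘L A = 1)
    (hAu₂ : A ∘L ContinuousLinearMap.adjoint A = 1)
    (hdense : (⨆ μ : ℂ, Module.End.eigenspace (A : H →ₗ[ℂ] H) μ).topologicalClosure = ⊤)
    (heigen : ∀ μ : ℂ, Module.End.HasEigenvalue (A : H →ₗ[ℂ] H) μ →
      ‖μ‖ = 1 ∧ μ ≠ 1 ∧ μ ≠ -1)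
    (η : H) (πu : H) (hfix : A πu - πu = η)
    (θ : ℝ) (hθ₀ : 0 < θ) (hθ₁ : θ < 1) :
    ∀ πseq : ℕ → H,
      (∀ p, πseq (p + 1) = (θ : ℂ) • πseq p + ((1 - θ : ℂ)) • (A (πseq p) - η)) →
      Tendsto πseq atTop (nhds πu) := by
  intro πseq hrec
  -- A preserves norms
  have hAiso : ∀ x : H, ‖A x‖ = ‖x‖ := by
    intro x
    have h0 : ContinuousLinearMap.adjoint A (A x) = x := by
      have := congrArg (fun B : H →L[ℂ] H => B x) hAu₁
      simpa using this
    have h : (inner ℂ (A x) (A x) : ℂ) = inner ℂ x x := by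
      rw [← ContinuousLinearMap.adjoint_inner_left, h0]
    rw [inner_self_eq_norm_sq_to_K, inner_self_eq_norm_sq_to_K] at h
    have h3 : ‖A x‖ ^ 2 = ‖x‖ ^ 2 := by exact_mod_cast h
    nlinarith [norm_nonneg (A x), norm_nonneg x]
  -- The iteration operator
  set T : H →L[ℂ] H := (θ : ℂ) • (1 : H →L[ℂ] H) + ((1 - θ : ℂ)) • A with hT
  have hTapp : ∀ x : H, T x = (θ : ℂ) • x + ((1 - θ : ℂ)) • A x := by
    intro x; simp [hT]
  -- T is a (weak) contraction
  have hTnorm : ∀ x : H, ‖T x‖ ≤ ‖x‖ := by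
    intro x
    rw [hTapp]
    calc ‖(θ : ℂ) • x + ((1 - θ : ℂ)) • A x‖
        ≤ ‖(θ : ℂ) • x‖ + ‖((1 - θ : ℂ)) • A x‖ := norm_add_le _ _
      _ = θ * ‖x‖ + (1 - θ) * ‖x‖ := by
          rw [norm_smul, norm_smul, hAiso]
          have h1 : ‖(θ : ℂ)‖ = θ := by
            rw [Complex.norm_real, Real.norm_of_nonneg hθ₀.le]
          have h2 : ‖((1 - θ : ℂ))‖ = 1 - θ := by
            rw [show ((1 - θ : ℂ)) = ((1 - θ : ℝ) : ℂ) by push_cast; ring,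
              Complex.norm_real, Real.norm_of_nonneg (by linarith)]
          rw [h1, h2]
      _ = ‖x‖ := by ring
  have hTpow : ∀ (p : ℕ) (x : H), ‖(T ^ p) x‖ ≤ ‖x‖ := by
    intro p
    induction p with
    | zero => intro x; simp
    | succ n ih =>
        intro x
        rw [pow_succ, ContinuousLinearMap.mul_apply]
        exact le_trans (ih _) (hTnorm x)
  -- The set of vectors on which T^p → 0
  set S : Submodule ℂ H :=
    { carrier := {x | Tendsto (fun p => (T ^ p) x) atTop (nhds 0)}
      zero_mem' := by simp
      add_mem' := by
        intro a b ha hb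
        have := (ha.add hb)
        simpa using this
      smul_mem' := by
        intro c x hx
        have := hx.const_smul c
        rw [smul_zero] at this
        exact this.congr (fun p => (map_smul (T ^ p) c x).symm) } with hS
  -- S contains every eigenspace
  have hsub : (⨆ μ : ℂ, Module.End.eigenspace (A : H →ₗ[ℂ] H) μ) ≤ S := by
    apply iSup_le
    intro μ x hx
    rcases eq_or_ne x 0 with rfl | hx0
    · exact S.zero_mem
    · have hev : Module.End.HasEigenvalue (A : H →ₗ[ℂ] H) μ :=
        Module.End.hasEigenvalue_of_hasEigenvector ⟨hx, hx0⟩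
      obtain ⟨hμn, hμ1, -⟩ := heigen μ hev
      have hAx : A x = μ • x := by
        have := hx
        rw [Module.End.mem_eigenspace_iff] at this
        simpa using this
      have hTx : T x = ((θ : ℂ) + (1 - θ) * μ) • x := by
        rw [hTapp, hAx, smul_smul, add_smul]
      have hTpx : ∀ p, (T ^ p) x = ((θ : ℂ) + (1 - θ) * μ) ^ p • x := by
        intro p
        induction p with
        | zero => simp
        | succ n ih => rw [pow_succ, pow_succ, ContinuousLinearMap.mul_apply, hTx,
            map_smul, ih, smul_smul, mul_comm]
      show Tendsto (fun p => (T ^ p) x) atTop (nhds 0)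
      simp only [hTpx]
      have hc : ‖(θ : ℂ) + (1 - θ) * μ‖ < 1 := theta_contraction hμn hμ1 hθ₀ hθ₁
      have := (tendsto_pow_atTop_nhds_zero_of_norm_lt_one hc).smul_const x
      simpa using this
  -- S is closed
  have hclosed : ∀ x : H, x ∈ closure (S : Set H) → x ∈ S := by
    intro x hx
    show Tendsto (fun p => (T ^ p) x) atTop (nhds 0)
    rw [NormedAddCommGroup.tendsto_nhds_zero]
    intro ε hε
    obtain ⟨y, hy, hxy⟩ := Metric.mem_closure_iff.mp hx (ε / 2) (by linarith)
    have hy' : Tendsto (fun p => (T ^ p) y) atTop (nhds 0) := hy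
    rw [NormedAddCommGroup.tendsto_nhds_zero] at hy'
    filter_upwards [hy' (ε / 2) (by linarith)] with p hp
    have : (T ^ p) x = (T ^ p) (x - y) + (T ^ p) y := by
      rw [← map_add]; congr 1; abel
    rw [this]
    calc ‖(T ^ p) (x - y) + (T ^ p) y‖ ≤ ‖(T ^ p) (x - y)‖ + ‖(T ^ p) y‖ := norm_add_le _ _
      _ ≤ ‖x - y‖ + ‖(T ^ p) y‖ := by linarith [hTpow p (x - y)]
      _ < ε / 2 + ε / 2 := by
          have : ‖x - y‖ < ε / 2 := by rwa [← dist_eq_norm]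
          linarith
      _ = ε := by ring
  -- Therefore S = ⊤
  have hSall : ∀ x : H, x ∈ S := by
    intro x
    have hx : x ∈ (⨆ μ : ℂ, Module.End.eigenspace (A : H →ₗ[ℂ] H) μ).topologicalClosure := by
      rw [hdense]; trivial
    exact hclosed x (closure_mono (SetLike.coe_subset_coe.mpr hsub) hx)
  -- Error recursion
  have herr : ∀ p, πseq p - πu = (T ^ p) (πseq 0 - πu) := by
    intro p
    induction p with
    | zero => simp
    | succ n ih =>
        have hAπu : A πu = πu + η := by rw [← hfix]; abel
        rw [pow_succ', ContinuousLinearMap.mul_apply, ← ih, hTapp, hrec n, map_sub, hAπu]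
        module

  have hlim : Tendsto (fun p => πseq p - πu) atTop (nhds 0) := by
    have := hSall (πseq 0 - πu)
    have h : Tendsto (fun p => (T ^ p) (πseq 0 - πu)) atTop (nhds 0) := this
    simpa only [← herr] using h
  have := hlim.add_const πu
  simpa using this
end
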